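/- Fix s ≥ 1 and distinct points ζ₀, …, ζ_{s−1} ∈ 𝕋, set q(z) = ∏_{k=0}^{s−1}(z − ζ_k), let g ∈ H², a₀, …, a_{s−1} ∈ ℂ, and let f(z) = a₀ + a₁z + ⋯ + a_{s−1}z^{s−1} + q(z)g(z) on 𝔻. Then for every j ≥ 0 the series ∑_{k=s+j}^∞ f̂(k) S_{k−s−j}(ζ₀, …, ζ_{s−1}) converges and its sum equals ĝ(j), where S_m denotes the complete homogeneous symmetric polynomial of degree m evaluated at (ζ₀, …, ζ_{s−1}). -/

import Mathlib

/-
Let `q*(X) = ∏ₖ (1 - ζₖ X)` be the reversal of `q`. The generating function of the complete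
homogeneous sums is `∑ₘ Sₘ Xᵐ = 1 / q*`, so convolving the coefficients of `q*` with `(Sₘ)` gives
`δ₀`. For `k ≥ s` the coefficient `f̂(k)` equals `∑_b q*_b ĝ(k - s + b)`. Substituting this into
the `N`-th partial sum and regrouping by the index of `ĝ`, the convolution identity collapses
everything to `ĝ(j)` except at most `s²` boundary terms `q*_b Sₘ ĝ(j + m + b)` with
`N ≤ m < N + s`. Because the `ζₖ` are distinct, partial fractions write `1 / q*` as a combination
of `1` and the geometric series `1 / (1 - ζₖ X)`, so `(Sₘ)` is bounded on `𝕋`; and `ĝ(n) → 0`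
since `g ∈ H²`. Hence the boundary terms vanish as `N → ∞`.
-/

open Complex Filter Metric Topology

noncomputable section

/-- Complete homogeneous symmetric polynomial of degree `k` in `s` variables,
evaluated at `z`. -/
def Sfun (s : ℕ) (z : Fin s → ℂ) (k : ℕ) : ℂ :=
  ∑ m ∈ Finset.univ.sym k, (m.1.map z).prod

open PowerSeries Finset
open scoped NNReal

section CompleteHomogeneous

variable {ι R : Type*} [DecidableEq ι]

def hsymmOn [CommSemiring R] (A : Finset ι) (z : ι → R) (k : ℕ) : R :=
  ∑ m ∈ A.sym k, (m.1.map z).prod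

lemma hsymmOn_insert [CommSemiring R] {A : Finset ι} {a : ι} (ha : a ∉ A)
    (z : ι → R) (n : ℕ) :
    hsymmOn (insert a A) z n = ∑ i ∈ range (n + 1), z a ^ i * hsymmOn A z (n - i) := by
  rw [hsymmOn, ← sum_coe_sort, ← (symInsertEquiv ha).symm.sum_comp, Fintype.sum_sigma,
    ← Fin.sum_univ_eq_sum_range]
  refine sum_congr rfl fun i _ => ?_
  rw [hsymmOn, mul_sum, ← sum_coe_sort (A.sym _)]
  refine sum_congr rfl fun m _ => ?_
  simp [symInsertEquiv, Sym.coe_fill, mul_comm, Sym.coe_replicate]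

lemma mk_hsymmOn_empty [CommSemiring R] (z : ι → R) : mk (hsymmOn ∅ z) = 1 := by
  ext (_ | n) <;> simp [hsymmOn, coeff_one, Sym.eq_nil_of_card_zero]

def geomSeries [Semiring R] (a : R) : R⟦X⟧ := mk (a ^ ·)

lemma geomSeries_mul_one_sub [CommRing R] (a : R) : geomSeries a * (1 - C a * X) = 1 := by
  simpa [geomSeries, rescale_mk] using congrArg (rescale a) (mk_one_mul_one_sub_eq_one R)

lemma mk_hsymmOn_insert [CommSemiring R] {A : Finset ι} {a : ι} (ha : a ∉ A)
    (z : ι → R) : mk (hsymmOn (insert a A) z) = geomSeries (z a) * mk (hsymmOn A z) := by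
  ext n
  rw [coeff_mul, Nat.sum_antidiagonal_eq_sum_range_succ_mk, coeff_mk, hsymmOn_insert ha]
  simp [geomSeries]

lemma Polynomial.reverse_X_sub_C [CommRing R] [Nontrivial R] (c : R) :
    (Polynomial.X - Polynomial.C c).reverse = 1 - Polynomial.C c * Polynomial.X := by
  rw [sub_eq_add_neg, ← Polynomial.C_neg, Polynomial.reverse_add_C, Polynomial.natDegree_X,
    ← one_mul Polynomial.X, Polynomial.reverse_mul_X, ← Polynomial.C_1, Polynomial.reverse_C]
  simp [sub_eq_add_neg]

lemma reverse_prod_X_sub_C_mul_mk_hsymmOn [CommRing R] [IsDomain R] (A : Finset ι) (z : ι → R) :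
    ((∏ a ∈ A, (Polynomial.X - Polynomial.C (z a))).reverse : R⟦X⟧) * mk (hsymmOn A z) = 1 := by
  induction A using Finset.induction with
  | empty =>
    rw [prod_empty, ← Polynomial.C_1, Polynomial.reverse_C, Polynomial.C_1, Polynomial.coe_one,
      mk_hsymmOn_empty, one_mul]
  | insert a A ha ih =>
    rw [prod_insert ha, Polynomial.reverse_mul_of_domain, Polynomial.reverse_X_sub_C,
      Polynomial.coe_mul, mk_hsymmOn_insert ha, mul_mul_mul_comm, ih, mul_one, mul_comm]
    simpa using geomSeries_mul_one_sub (z a)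

lemma geomSeries_mul_geomSeries {K : Type*} [Field K] {a b : K} (hab : a ≠ b) :
    geomSeries a * geomSeries b = (a - b)⁻¹ • (a • geomSeries a - b • geomSeries b) := by
  ext n
  rw [coeff_mul, Nat.sum_antidiagonal_eq_sum_range_succ_mk]
  simp only [geomSeries, coeff_mk, map_smul, map_sub, smul_eq_mul, ← pow_succ']
  rw [← geom_sum₂_mul, mul_comm, mul_inv_cancel_right₀ (sub_ne_zero.mpr hab)]
  simp

lemma mk_hsymmOn_mem_span {K : Type*} [Field K] {A : Finset ι} {z : ι → K} (hz : Set.InjOn z A) :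
    mk (hsymmOn A z) ∈ Submodule.span K (insert 1 ((fun a => geomSeries (z a)) '' A)) := by
  induction A using Finset.induction with
  | empty => exact mk_hsymmOn_empty z ▸ Submodule.subset_span (Set.mem_insert _ _)
  | insert a A ha ih =>
    have hgeom : ∀ b ∈ insert a A, geomSeries (z b) ∈
        Submodule.span K (insert 1 ((fun a => geomSeries (z a)) '' ↑(insert a A))) := fun b hb =>
      Submodule.subset_span (Set.mem_insert_of_mem _ (Set.mem_image_of_mem _ hb))
    have hmul : (Submodule.span K (insert 1 ((fun a => geomSeries (z a)) '' A))).map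
        (LinearMap.mulLeft K (geomSeries (z a))) ≤
          Submodule.span K (insert 1 ((fun a => geomSeries (z a)) '' ↑(insert a A))) := by
      rw [Submodule.map_span_le]
      rintro _ (rfl | ⟨k, hk, rfl⟩)
      · simpa using hgeom a (mem_insert_self a A)
      · have hak : z a ≠ z k := fun h => ha (hz.eq_iff (by simp) (by simp [hk]) |>.mp h ▸ hk)
        rw [LinearMap.mulLeft_apply, geomSeries_mul_geomSeries hak]
        exact Submodule.smul_mem _ _ (Submodule.sub_mem _
          (Submodule.smul_mem _ _ (hgeom a (mem_insert_self a A)))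
          (Submodule.smul_mem _ _ (hgeom k (mem_insert_of_mem hk))))
    rw [mk_hsymmOn_insert ha]
    exact hmul (Submodule.mem_map_of_mem (ih (hz.mono (by simp))))

lemma exists_norm_hsymmOn_le {𝕜 : Type*} [NormedField 𝕜] {A : Finset ι} {z : ι → 𝕜}
    (hz : Set.InjOn z A) (hz1 : ∀ a ∈ A, ‖z a‖ ≤ 1) : ∃ C, ∀ n, ‖hsymmOn A z n‖ ≤ C := by
  have hgen : ∀ φ ∈ insert 1 ((fun a => geomSeries (z a)) '' A), ∃ C, ∀ n, ‖coeff n φ‖ ≤ C := by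
    rintro _ (rfl | ⟨a, ha, rfl⟩)
    · exact ⟨1, fun n => by rw [coeff_one]; split_ifs <;> simp⟩
    · exact ⟨1, fun n => by simpa [geomSeries] using pow_le_one₀ (norm_nonneg _) (hz1 a ha)⟩
  simpa using Submodule.span_induction (p := fun φ _ => ∃ C, ∀ n, ‖coeff n φ‖ ≤ C)
    (fun φ hφ => hgen φ hφ) ⟨0, by simp⟩
    (fun φ ψ _ _ ⟨C, hC⟩ ⟨D, hD⟩ => ⟨C + D, fun n => by
      simpa using (norm_add_le _ _).trans (add_le_add (hC n) (hD n))⟩)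
    (fun c φ _ ⟨C, hC⟩ => ⟨‖c‖ * C, fun n => by
      simpa using mul_le_mul_of_nonneg_left (hC n) (norm_nonneg c)⟩)
    (mk_hsymmOn_mem_span hz)

end CompleteHomogeneous

lemma coeff_natDegree_add_mul_mk {R : Type*} [Semiring R] (q : Polynomial R) (c : ℕ → R) (i : ℕ) :
    coeff (q.natDegree + i) ((q : R⟦X⟧) * mk c) =
      ∑ b ∈ range (q.natDegree + 1), q.reverse.coeff b * c (i + b) := by
  set d := q.natDegree
  rw [coeff_mul, Nat.sum_antidiagonal_eq_sum_range_succ_mk]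
  simp only [Polynomial.coeff_coe, coeff_mk]
  calc _ = ∑ k ∈ range (d + 1), q.coeff k * c (d + i - k) := by
        symm
        apply sum_subset (range_subset_range.mpr (by omega))
        intro k _ hk
        simp [Polynomial.coeff_eq_zero_of_natDegree_lt (by simpa using hk : d < k)]
    _ = _ := by
        rw [← sum_range_reflect]
        refine sum_congr rfl fun b hb => ?_
        have hb : b ≤ d := Nat.lt_succ_iff.mp (mem_range.mp hb)
        rw [Polynomial.coeff_reverse, Polynomial.revAt_le hb]
        congr 2; omega

section HasSum

variable {R : Type*} [CommRing R] [TopologicalSpace R]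

lemma Polynomial.hasSum_coeff_mul_pow (p : Polynomial R) (z : R) :
    HasSum (fun n => p.coeff n * z ^ n) (p.eval z) := by
  rw [Polynomial.eval_eq_sum_range]
  exact hasSum_sum_of_ne_finset_zero fun n hn => by
    rw [Polynomial.coeff_eq_zero_of_natDegree_lt (by simpa using hn), zero_mul]

lemma hasSum_coeff_polynomial_mul_mk [IsTopologicalRing R] (Q : Polynomial R) {c : ℕ → R} {z G : R}
    (hc : HasSum (fun n => c n * z ^ n) G) :
    HasSum (fun n => coeff n ((Q : R⟦X⟧) * mk c) * z ^ n) (Q.eval z * G) := by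
  induction Q using Polynomial.induction_on' with
  | add p q hp hq => simpa [add_mul] using hp.add hq
  | monomial m a =>
    rw [← hasSum_nat_add_iff' m]
    have : HasSum (fun n => a * z ^ m * (c n * z ^ n)) (a * z ^ m * G) := hc.mul_left _
    rw [← Polynomial.C_mul_X_pow_eq_monomial]
    simp only [Polynomial.coe_mul, Polynomial.coe_C, Polynomial.coe_pow, Polynomial.coe_X,
      mul_assoc, coeff_C_mul, coeff_X_pow_mul', Polynomial.eval_mul, Polynomial.eval_C,
      Polynomial.eval_pow, Polynomial.eval_X]
    rw [sum_eq_zero fun x hx => by simp [not_le.mpr (mem_range.mp hx)], sub_zero]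
    rw [← mul_assoc]
    refine this.congr_fun fun n => ?_
    simp only [le_add_iff_nonneg_left, zero_le, if_true, Nat.add_sub_cancel, coeff_mk, pow_add]
    ring

end HasSum

section PowerSeriesUniqueness

variable {𝕜 : Type*} [RCLike 𝕜] {c d : ℕ → 𝕜} {F : 𝕜 → 𝕜} {r : ℝ≥0}

lemma hasFPowerSeriesOnBall_ofScalars_of_hasSum (hr : 0 < r)
    (hc : ∀ z ∈ Metric.ball (0 : 𝕜) r, HasSum (fun n => c n * z ^ n) (F z)) :
    HasFPowerSeriesOnBall F (FormalMultilinearSeries.ofScalars 𝕜 c) 0 r where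
  r_le := by
    refine ENNReal.le_of_forall_pos_nnreal_lt fun ρ _ hρ => ?_
    have hz : ‖((ρ : ℝ) : 𝕜)‖ = ρ := by simp
    have := (hc (ρ : ℝ) (by simpa [hz] using hρ)).summable.tendsto_atTop_zero.norm
    exact FormalMultilinearSeries.le_radius_of_tendsto _ (l := 0) (by simpa [hz] using this)
  r_pos := by simpa using hr
  hasSum {y} hy := by
    simpa [FormalMultilinearSeries.ofScalars_apply_eq, mul_comm] using hc y (by simpa using hy)

lemma eq_of_hasSum_mul_pow (hr : 0 < r)
    (hc : ∀ z ∈ Metric.ball (0 : 𝕜) r, HasSum (fun n => c n * z ^ n) (F z))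
    (hd : ∀ z ∈ Metric.ball (0 : 𝕜) r, HasSum (fun n => d n * z ^ n) (F z)) : c = d :=
  FormalMultilinearSeries.ofScalars_series_injective 𝕜 𝕜 <|
    (hasFPowerSeriesOnBall_ofScalars_of_hasSum hr hc).hasFPowerSeriesAt.eq_formalMultilinearSeries
      (hasFPowerSeriesOnBall_ofScalars_of_hasSum hr hd).hasFPowerSeriesAt

end PowerSeriesUniqueness

lemma tendsto_sum_range_add_of_tendsto_zero {M : Type*} [AddCommMonoid M] [TopologicalSpace M]
    [ContinuousAdd M] {F : ℕ → M} (hF : Tendsto F atTop (𝓝 0)) (k : ℕ) :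
    Tendsto (fun N => ∑ t ∈ range k, F (N + t)) atTop (𝓝 0) := by
  simpa using tendsto_finsetSum (range k) fun t _ => hF.comp (tendsto_add_atTop_nat t)

section Toeplitz

variable {R : Type*} [NormedCommRing R] {P : Polynomial R} {d : ℕ} {h : ℕ → R}

lemma sum_sum_coeff_mul_mul_eq_of_mul_mk_eq_one (hP : P.natDegree ≤ d) (hPh : (P : R⟦X⟧) * mk h = 1)
    (u : ℕ → R) {N : ℕ} (hN : 0 < N) :
    ∑ b ∈ range (d + 1), ∑ i ∈ range (N + d - b), P.coeff b * h i * u (i + b) = u 0 := by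
  have hconv (r : ℕ) : ∑ b ∈ range (r + 1), P.coeff b * h (r - b) = if r = 0 then 1 else 0 := by
    have := congrArg (coeff r) hPh
    rw [coeff_mul, Nat.sum_antidiagonal_eq_sum_range_succ
      (fun b k => coeff b (P : R⟦X⟧) * coeff k (mk h)), coeff_one] at this
    simpa only [Polynomial.coeff_coe, coeff_mk] using this
  calc _ = ∑ b ∈ range (N + d), ∑ i ∈ range (N + d - b), P.coeff b * h i * u (i + b) := by
        refine sum_subset (range_subset_range.mpr (by omega)) fun b _ hb => ?_
        simp [Polynomial.coeff_eq_zero_of_natDegree_lt (lt_of_le_of_lt hP (by simpa using hb))]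
    _ = ∑ r ∈ range (N + d), (∑ b ∈ range (r + 1), P.coeff b * h (r - b)) * u r := by
        rw [← sum_range_diag_flip]
        refine sum_congr rfl fun r _ => ?_
        rw [sum_mul]
        refine sum_congr rfl fun b hb => ?_
        rw [Nat.sub_add_cancel (Nat.lt_succ_iff.mp (mem_range.mp hb))]
    _ = u 0 := by simp [hconv, hN]

theorem tendsto_sum_range_of_mul_mk_eq_one (hP : P.natDegree ≤ d) (hPh : (P : R⟦X⟧) * mk h = 1)
    (hh : ∃ C, ∀ n, ‖h n‖ ≤ C) {u : ℕ → R} (hu : Tendsto u atTop (𝓝 0)) :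
    Tendsto (fun N => ∑ i ∈ range N, (∑ b ∈ range (d + 1), P.coeff b * u (i + b)) * h i)
      atTop (𝓝 (u 0)) := by
  set E : ℕ → R := fun N =>
    ∑ b ∈ range (d + 1), ∑ t ∈ range (d - b), P.coeff b * h (N + t) * u (N + t + b)
  have hE : Tendsto E atTop (𝓝 0) := by
    obtain ⟨C, hC⟩ := hh
    have hF (b : ℕ) : Tendsto (fun i => P.coeff b * h i * u (i + b)) atTop (𝓝 0) := by
      simpa [mul_assoc] using (isBoundedUnder_le_mul_tendsto_zero (f := h)
        (isBoundedUnder_of ⟨C, hC⟩) (hu.comp (tendsto_add_atTop_nat b))).const_mul (P.coeff b)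
    simpa using tendsto_finsetSum (range (d + 1))
      fun b _ => tendsto_sum_range_add_of_tendsto_zero (hF b) (d - b)
  have hsplit : ∀ N, 0 < N →
      ∑ i ∈ range N, (∑ b ∈ range (d + 1), P.coeff b * u (i + b)) * h i = u 0 - E N := by
    intro N hN
    rw [eq_sub_iff_add_eq, ← sum_sum_coeff_mul_mul_eq_of_mul_mk_eq_one hP hPh u hN]
    simp only [E, sum_mul, sum_comm (s := range N), ← sum_add_distrib]
    refine sum_congr rfl fun b hb => ?_
    rw [Nat.add_sub_assoc (Nat.lt_succ_iff.mp (mem_range.mp hb)), sum_range_add]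
    congr 1
    refine sum_congr rfl fun i _ => ?_
    ring_nf
  simpa using (tendsto_const_nhds.sub hE).congr'
    (eventually_atTop.mpr ⟨1, fun N hN => (hsplit N hN).symm⟩)

end Toeplitz

theorem coefficients_of_Qf_via_hsymm_general
    (s : ℕ) (ζ : Fin s → ℂ)
    (hζ : ∀ k, ‖ζ k‖ = 1) (hinj : Function.Injective ζ)
    (g : ℂ → ℂ) (gh : ℕ → ℂ)
    (hg : ∀ z ∈ Metric.ball (0 : ℂ) 1, HasSum (fun n => gh n * z ^ n) (g z))
    (hg2 : Summable (fun n => ‖gh n‖ ^ 2))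
    (a : Fin s → ℂ) (f : ℂ → ℂ)
    (hf : ∀ z ∈ Metric.ball (0 : ℂ) 1,
      f z = (∑ j : Fin s, a j * z ^ (j : ℕ)) + (∏ k, (z - ζ k)) * g z)
    (fh : ℕ → ℂ)
    (hfh : ∀ z ∈ Metric.ball (0 : ℂ) 1, HasSum (fun n => fh n * z ^ n) (f z)) :
    ∀ j : ℕ,
      Tendsto (fun N => ∑ i ∈ Finset.range N, fh (s + j + i) * Sfun s ζ i)
        atTop (𝓝 (gh j)) := by
  intro j
  set q : Polynomial ℂ := ∏ k, (Polynomial.X - Polynomial.C (ζ k))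
  set p : Polynomial ℂ := ∑ k : Fin s, Polynomial.C (a k) * Polynomial.X ^ (k : ℕ)
  have hq : q.natDegree = s :=
    (Polynomial.natDegree_finsetProd_X_sub_C_eq_card univ ζ).trans (card_fin s)
  have hfh_eq : fh = fun n => coeff n ((p : ℂ⟦X⟧) + (q : ℂ⟦X⟧) * mk gh) :=
    eq_of_hasSum_mul_pow one_pos hfh fun z hz => by
      rw [hf z hz]
      simpa [p, q, add_mul, Polynomial.eval_finsetSum, Polynomial.eval_prod] using
        (p.hasSum_coeff_mul_pow z).add (hasSum_coeff_polynomial_mul_mk q (hg z hz))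
  have hfh_shift (i : ℕ) :
      fh (s + j + i) = ∑ b ∈ range (s + 1), q.reverse.coeff b * gh (j + (i + b)) := by
    have hp : p.degree < ↑(s + j + i) :=
      (Polynomial.degree_sum_fin_lt a).trans_le (by exact_mod_cast by omega)
    rw [congrFun hfh_eq, map_add, Polynomial.coeff_coe, Polynomial.coeff_eq_zero_of_degree_lt hp,
      zero_add, ← hq, add_assoc, coeff_natDegree_add_mul_mk]
    simp [add_assoc]
  have hgh : Tendsto gh atTop (𝓝 0) := tendsto_zero_iff_norm_tendsto_zero.mpr <| by
    simpa [Real.sqrt_sq (norm_nonneg _)] using hg2.tendsto_atTop_zero.sqrt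
  have hS : (q.reverse : ℂ⟦X⟧) * mk (Sfun s ζ) = 1 :=
    reverse_prod_X_sub_C_mul_mk_hsymmOn univ ζ
  have hS_bdd : ∃ C, ∀ n, ‖Sfun s ζ n‖ ≤ C :=
    exists_norm_hsymmOn_le hinj.injOn fun k _ => (hζ k).le
  have hu : Tendsto (fun r => gh (j + r)) atTop (𝓝 0) :=
    hgh.comp (tendsto_atTop_mono (Nat.le_add_left · j) tendsto_id)
  have hdeg : q.reverse.natDegree ≤ s := (Polynomial.reverse_natDegree_le q).trans hq.le
  simpa only [hfh_shift, add_zero] using tendsto_sum_range_of_mul_mk_eq_one hdeg hS hS_bdd hu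

/-- For `s ≥ 1`, distinct `ζ₀, …, ζ_{s-1} ∈ 𝕋`,
`q(z) = ∏ (z - ζ_k)`, `g ∈ H²` and `f(z) = a₀ + ⋯ + a_{s-1} z^{s-1} + q(z) g(z)` on
`𝔻`:  for every `j ≥ 0` the series `∑_{k=s+j}^∞ fh(k) S_{k-s-j}(ζ₀,…,ζ_{s-1})`
converges with sum `gh(j)`. -/
theorem coefficients_of_Qf_via_hsymm
    (s : ℕ) (hs : 1 ≤ s) (ζ : Fin s → ℂ)
    (hζ : ∀ k, ‖ζ k‖ = 1) (hinj : Function.Injective ζ)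
    (g : ℂ → ℂ) (gh : ℕ → ℂ)
    (hg : ∀ z ∈ Metric.ball (0 : ℂ) 1, HasSum (fun n => gh n * z ^ n) (g z))
    (hg2 : Summable (fun n => ‖gh n‖ ^ 2))
    (a : Fin s → ℂ) (f : ℂ → ℂ)
    (hf : ∀ z ∈ Metric.ball (0 : ℂ) 1,
      f z = (∑ j : Fin s, a j * z ^ (j : ℕ)) + (∏ k, (z - ζ k)) * g z)
    (fh : ℕ → ℂ)
    (hfh : ∀ z ∈ Metric.ball (0 : ℂ) 1, HasSum (fun n => fh n * z ^ n) (f z)) :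
    ∀ j : ℕ,
      Tendsto (fun N => ∑ i ∈ Finset.range N, fh (s + j + i) * Sfun s ζ i)
        atTop (𝓝 (gh j)) :=
  coefficients_of_Qf_via_hsymm_general s ζ hζ hinj g gh hg hg2 a f hf fh hfh
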